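/- arXiv:2106.01030 — 9 statements merged into one kernel-verified Lean document; each statement's English description precedes it below -/
import Mathlib

section
/- Every upward-closed set of words over a finite alphabet (upward-closed with respect to the subsequence order) is a regular language. -/
open Classical in
/-- Finite basis from a partially well-ordered relation. -/
private theorem exists_finite_basis {α : Type*} {r : α → α → Prop}
    (hpwo : (Set.univ : Set α).PartiallyWellOrderedOn r) (L : Set α) :
    ∃ B : Finset α, ↑B ⊆ L ∧ ∀ w ∈ L, ∃ b ∈ B, r b w := by
  by_contra h
  push_neg at h
  -- for every finite `B ⊆ L`, there is `w ∈ L` not above any element of `B`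
  have key : ∀ B : Finset α, ↑B ⊆ L → ∃ w ∈ L, ∀ b ∈ B, ¬ r b w := by
    intro B hB
    rcases h B hB with ⟨w, hw, hnb⟩
    exact ⟨w, hw, fun b hb hr => hnb b hb hr⟩
  -- pick such a `w` via choice
  have hne : Nonempty α := by
    rcases key ∅ (by simp) with ⟨w, _, _⟩
    exact ⟨w⟩
  let g : Finset α → α := fun B =>
    if hB : ↑B ⊆ L then (key B hB).choose else Classical.arbitrary α
  have hgL : ∀ B : Finset α, ↑B ⊆ L → g B ∈ L := by
    intro B hB
    simp only [g, dif_pos hB]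
    exact (key B hB).choose_spec.1
  have hgnr : ∀ B : Finset α, (hB : ↑B ⊆ L) → ∀ b ∈ B, ¬ r b (g B) := by
    intro B hB
    simp only [g, dif_pos hB]
    exact (key B hB).choose_spec.2
  -- build a bad sequence
  let F : ℕ → Finset α := fun n => Nat.rec (motive := fun _ => Finset α) ∅ (fun _ B => insert (g B) B) n
  have hF : ∀ n, ↑(F n) ⊆ L := by
    intro n
    induction n with
    | zero => simp [F]
    | succ n ih =>
      intro x hx
      simp only [F, Finset.coe_insert, Set.mem_insert_iff] at hx
      rcases hx with rfl | hx
      · exact hgL _ ih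
      · exact ih hx
  let f : ℕ → α := fun n => g (F n)
  have hmono : ∀ m n : ℕ, m ≤ n → F m ⊆ F n := by
    intro m n hmn
    induction n with
    | zero => simp [Nat.le_zero.mp hmn]
    | succ n ih =>
      rcases Nat.lt_or_ge m (n + 1) with h' | h'
      · exact (ih (Nat.lt_succ_iff.mp h')).trans (Finset.subset_insert _ _)
      · have : m = n + 1 := le_antisymm hmn h'
        simp [this]
  have hbad : ∀ m n : ℕ, m < n → ¬ r (f m) (f n) := by
    intro m n hmn
    have hmem : f m ∈ F n := by
      have : f m ∈ F (m + 1) := Finset.mem_insert_self _ _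
      exact hmono (m + 1) n hmn this
    exact hgnr (F n) (hF n) _ hmem
  rcases hpwo (fun n => ⟨f n, Set.mem_univ _⟩) with ⟨m, n, hmn, hr⟩
  exact hbad m n hmn hr

open Classical in
/-- Higman's lemma for the sublist order: finite basis for any set of words. -/
private theorem exists_finite_basis_sublist {σ : Type} [Fintype σ] (L : Set (List σ)) :
    ∃ B : Finset (List σ), ↑B ⊆ L ∧ ∀ w ∈ L, ∃ b ∈ B, b.Sublist w := by
  have h1 : (Set.univ : Set σ).PartiallyWellOrderedOn (· = ·) :=
    Set.Finite.partiallyWellOrderedOn (Set.finite_univ)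
  have h2 := h1.partiallyWellOrderedOn_sublistForall₂
  have h3 : (Set.univ : Set (List σ)).PartiallyWellOrderedOn
      (List.SublistForall₂ (· = ·)) := by
    have : {l : List σ | ∀ x, x ∈ l → x ∈ (Set.univ : Set σ)} = Set.univ := by
      ext l; simp
    rwa [this] at h2
  rcases exists_finite_basis h3 L with ⟨B, hBL, hB⟩
  refine ⟨B, hBL, fun w hw => ?_⟩
  rcases hB w hw with ⟨b, hb, hr⟩
  refine ⟨b, hb, ?_⟩
  rcases List.sublistForall₂_iff.mp hr with ⟨l, hfor, hsub⟩
  rwa [show b = l from (List.forall₂_eq_eq_eq ▸ hfor : b = l)]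

/-- One step of greedy matching of the word `b`: the state counts how many
letters of `b` have been matched so far. -/
private def stepW {σ : Type} [DecidableEq σ] (b : List σ) (k : Fin (b.length + 1)) (a : σ) :
    Fin (b.length + 1) :=
  if h : b[(k : ℕ)]? = some a then
    ⟨(k : ℕ) + 1, by
      have : (k : ℕ) < b.length := by
        by_contra hk
        rw [List.getElem?_eq_none (by omega)] at h
        simp at h
      omega⟩
  else k

/-- Greedy matching invariant. -/
private theorem stepW_foldl {σ : Type} [DecidableEq σ] (b : List σ) (u : List σ) :
    ∀ k : Fin (b.length + 1),
      b.drop ((u.foldl (stepW b) k : Fin (b.length + 1)) : ℕ) =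
        u.foldl (fun r a => if r.head? = some a then r.tail else r) (b.drop (k : ℕ)) := by
  induction u with
  | nil => intro k; simp
  | cons a u ih =>
    intro k
    simp only [List.foldl_cons]
    rw [ih]
    congr 1
    rw [List.head?_drop]
    by_cases h : b[(k : ℕ)]? = some a
    · rw [if_pos h]
      simp only [stepW, dif_pos h]
      rw [List.tail_drop]
    · rw [if_neg h]
      simp only [stepW, dif_neg h]

/-- Greedy matching is correct: the remainder is empty iff `b` is a sublist of `u`. -/
private theorem greedy_correct {σ : Type} [DecidableEq σ] (b u : List σ) :
    u.foldl (fun r a => if r.head? = some a then r.tail else r) b = [] ↔ b.Sublist u := by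
  induction u generalizing b with
  | nil =>
    rw [List.foldl_nil, List.sublist_nil]
  | cons a u ih =>
    rw [List.foldl_cons]
    cases b with
    | nil =>
      have h1 : (([] : List σ).head? = some a) = False := by simp
      rw [show (if ([] : List σ).head? = some a then ([] : List σ).tail else []) = ([] : List σ)
        by rw [if_neg (by simp)], ih]
      simp [List.nil_sublist]
    | cons c b' =>
      by_cases hca : c = a
      · subst hca
        rw [if_pos (by simp : (c :: b').head? = some c), List.tail_cons, ih]
        exact ⟨fun h => List.Sublist.cons₂ _ h, fun h => (List.cons_sublist_cons).mp h⟩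
      · rw [if_neg (by simp [hca] : ¬ (c :: b').head? = some a), ih]
        constructor
        · intro h; exact h.cons _
        · intro h
          cases h with
          | cons _ h => exact h
          | cons_cons => exact absurd rfl hca

/-- Every set of words over a finite alphabet that is upward-closed with respect
to the subsequence (scattered subword) order is a regular language. -/
theorem upwardClosed_subsequence_isRegular {σ : Type} [Fintype σ] (L : Language σ)
    (hup : ∀ w w' : List σ, w ∈ L → w.Sublist w' → w' ∈ L) :
    Language.IsRegular L := by
  letI : DecidableEq σ := Classical.decEq σ
  rcases exists_finite_basis_sublist (L : Set (List σ)) with ⟨B, hBL, hB⟩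
  -- state type: for every basis word, how many letters have been matched
  refine ⟨∀ b : ↥B, Fin (b.1.length + 1), inferInstance,
    { step := fun q a => fun b => stepW b.1 (q b) a
      start := fun b => ⟨0, Nat.succ_pos _⟩
      accept := {q | ∃ b : ↥B, ((q b : Fin (b.1.length + 1)) : ℕ) = b.1.length} }, ?_⟩
  ext w
  have heval : ∀ (u : List σ) (q : ∀ b : ↥B, Fin (b.1.length + 1)) (b : ↥B),
      (DFA.evalFrom
        { step := fun q a => fun b => stepW b.1 (q b) a
          start := fun b => ⟨0, Nat.succ_pos _⟩
          accept := {q | ∃ b : ↥B, ((q b : Fin (b.1.length + 1)) : ℕ) = b.1.length} }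
        q u) b = u.foldl (stepW b.1) (q b) := by
    intro u
    induction u with
    | nil => intro q b; rfl
    | cons a u ih =>
      intro q b
      simp only [DFA.evalFrom, List.foldl_cons] at *
      exact ih _ b
  constructor
  · rintro hw
    rcases hw with ⟨b, hb⟩
    rw [heval] at hb
    have h1 := stepW_foldl b.1 w ⟨0, Nat.succ_pos _⟩
    rw [hb] at h1
    simp only [List.drop_length, List.drop_zero] at h1
    have : b.1.Sublist w := (greedy_correct b.1 w).mp h1.symm
    exact hup b.1 w (hBL b.2) this
  · intro hw
    rcases hB w hw with ⟨b, hbB, hbw⟩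
    refine ⟨⟨b, hbB⟩, ?_⟩
    rw [heval]
    show Fin.val (w.foldl (stepW b) (⟨0, Nat.succ_pos _⟩ : Fin (b.length + 1))) = b.length
    have h1 := stepW_foldl b w (⟨0, Nat.succ_pos _⟩ : Fin (b.length + 1))
    simp only [List.drop_zero] at h1
    rw [(greedy_correct b w).mpr hbw] at h1
    have h2 := List.drop_eq_nil_iff.mp h1
    have hub : Fin.val (w.foldl (stepW b) (⟨0, Nat.succ_pos _⟩ : Fin (b.length + 1)))
        ≤ b.length := Nat.lt_succ_iff.mp (Fin.is_lt _)
    omega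
end

section
/- The subsequence relation on finite words over a finite alphabet is a well-quasi-order: every infinite sequence of words contains two words w_i, w_j with i < j such that w_i is a subsequence of w_j. -/
/-- Higman's lemma for a finite alphabet: the subsequence relation on finite words
over a finite alphabet is a well-quasi-order; every infinite sequence of words
contains indices `i < j` such that the `i`-th word is a subsequence of the `j`-th. -/
theorem higman_sublist_wqo {σ : Type} [Fintype σ] (f : ℕ → List σ) :
    ∃ i j : ℕ, i < j ∧ (f i).Sublist (f j) := by
  have h : (Set.univ : Set σ).PartiallyWellOrderedOn (· = ·) :=
    Set.finite_univ.partiallyWellOrderedOn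
  have H := h.partiallyWellOrderedOn_sublistForall₂ (· = ·)
  obtain ⟨i, j, hij, hr⟩ := H (fun n => ⟨f n, fun x _ => Set.mem_univ x⟩)
  refine ⟨i, j, hij, ?_⟩
  obtain ⟨l, hall, hsub⟩ := List.sublistForall₂_iff.1 hr
  rw [show f i = l from List.forall₂_eq_eq_eq ▸ hall]; exact hsub
end

section
/- Let f : Σ* → M be a function from words over a finite alphabet Σ into a finite set M of 'output matrices' that is monotone with respect to the subsequence order ⊑ on words and a partial order ≤ on M (h1 ⊑ h2 implies f(h1) ≤ f(h2)). Then for every A ∈ M, the preimage f^{-1}({B : B ≥ A}) is a regular language, and consequently f^{-1}(A) is a regular language. -/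
namespace MonotoneMatrixAux

open List

variable {T : Type}

/-! ### Closure properties of regular languages (complement, intersection, finite unions) -/

theorem isRegular_compl {L : Set (List T)} (h : Language.IsRegular L) :
    Language.IsRegular (Lᶜ : Set (List T)) := by
  obtain ⟨S, inst, M, rfl⟩ := h
  refine ⟨S, inst, ⟨M.step, M.start, M.acceptᶜ⟩, ?_⟩
  ext w
  simp only [DFA.mem_accepts, Set.mem_compl_iff]
  rfl

/-- Product DFA with an arbitrary acceptance set. -/
def prodDFA {S1 S2 : Type} (M : DFA T S1) (N : DFA T S2) (acc : Set (S1 × S2)) :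
    DFA T (S1 × S2) :=
  ⟨fun p a => (M.step p.1 a, N.step p.2 a), (M.start, N.start), acc⟩

theorem prodDFA_evalFrom {S1 S2 : Type} (M : DFA T S1) (N : DFA T S2) (acc : Set (S1 × S2)) :
    ∀ (w : List T) (s : S1) (t : S2),
      (prodDFA M N acc).evalFrom (s, t) w = (M.evalFrom s w, N.evalFrom t w)
  | [], s, t => rfl
  | a :: w, s, t => prodDFA_evalFrom M N acc w (M.step s a) (N.step t a)

theorem isRegular_inter {L1 L2 : Set (List T)} (h1 : Language.IsRegular L1) (h2 : Language.IsRegular L2) :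
    Language.IsRegular (L1 ∩ L2 : Set (List T)) := by
  obtain ⟨S1, i1, M, rfl⟩ := h1
  obtain ⟨S2, i2, N, rfl⟩ := h2
  refine ⟨S1 × S2, @instFintypeProd S1 S2 i1 i2,
    prodDFA M N {p | p.1 ∈ M.accept ∧ p.2 ∈ N.accept}, ?_⟩
  ext w
  have : (prodDFA M N {p : S1 × S2 | p.1 ∈ M.accept ∧ p.2 ∈ N.accept}).eval w
      = (M.evalFrom M.start w, N.evalFrom N.start w) := prodDFA_evalFrom M N _ w _ _
  simp only [DFA.mem_accepts, DFA.eval] at this ⊢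
  rw [this]
  exact Iff.rfl

theorem isRegular_union {L1 L2 : Set (List T)} (h1 : Language.IsRegular L1) (h2 : Language.IsRegular L2) :
    Language.IsRegular (L1 ∪ L2 : Set (List T)) := by
  obtain ⟨S1, i1, M, rfl⟩ := h1
  obtain ⟨S2, i2, N, rfl⟩ := h2
  refine ⟨S1 × S2, @instFintypeProd S1 S2 i1 i2,
    prodDFA M N {p | p.1 ∈ M.accept ∨ p.2 ∈ N.accept}, ?_⟩
  ext w
  have : (prodDFA M N {p : S1 × S2 | p.1 ∈ M.accept ∨ p.2 ∈ N.accept}).eval w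
      = (M.evalFrom M.start w, N.evalFrom N.start w) := prodDFA_evalFrom M N _ w _ _
  simp only [DFA.mem_accepts, DFA.eval] at this ⊢
  rw [this]
  exact Iff.rfl

theorem isRegular_empty : Language.IsRegular (∅ : Set (List T)) :=
  ⟨Unit, inferInstance, ⟨fun _ _ => (), (), ∅⟩, by ext w; simp [DFA.mem_accepts]; exact Set.notMem_empty w⟩

theorem isRegular_biUnion {ι : Type} [DecidableEq ι] (s : Finset ι) (L : ι → Set (List T))
    (h : ∀ i ∈ s, Language.IsRegular (L i)) :
    Language.IsRegular (⋃ i ∈ s, L i : Set (List T)) := by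
  classical
  induction s using Finset.induction_on with
  | empty => simpa using isRegular_empty
  | @insert a s ha ih =>
      have : (⋃ i ∈ insert a s, L i : Set (List T)) = (L a ∪ ⋃ i ∈ s, L i : Set (List T)) := by
        simp [Set.iUnion_or, Set.iUnion_union_distrib]
      rw [this]
      exact isRegular_union (h a (Finset.mem_insert_self a s))
        (ih fun i hi => h i (Finset.mem_insert_of_mem hi))

/-! ### The language of superwords of a fixed word is regular -/

/-- DFA recognizing `{w | v <+ w}`: the state records how much of `v` has been matched. -/
def subDFA [DecidableEq T] (v : List T) : DFA T (Fin (v.length + 1)) where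
  step i a :=
    if v[i.val]? = some a then
      ⟨min (i.val + 1) v.length, Nat.lt_succ_of_le (Nat.min_le_right _ _)⟩
    else i
  start := ⟨0, Nat.succ_pos _⟩
  accept := {i | v.length ≤ i.val}

theorem subDFA_evalFrom [DecidableEq T] (v : List T) :
    ∀ (w : List T) (i : Fin (v.length + 1)),
      ((subDFA v).evalFrom i w ∈ (subDFA v).accept ↔ v.drop i.val <+ w)
  | [], i => by
      have h1 : (subDFA v).evalFrom i [] = i := rfl
      rw [h1]
      simp only [subDFA, Set.mem_setOf_eq, List.sublist_nil]
      constructor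
      · intro h; exact List.drop_eq_nil_of_le h
      · intro h
        by_contra hc
        push_neg at hc
        have : v.drop i.val ≠ [] := by
          intro he
          have := (List.length_drop (i := i.val) (l := v)) ▸ congrArg List.length he
          simp at this
          omega
        exact this h
  | a :: w, i => by
      have hstep : (subDFA v).evalFrom i (a :: w)
          = (subDFA v).evalFrom ((subDFA v).step i a) w := rfl
      rw [hstep, subDFA_evalFrom v w]
      by_cases h : v[i.val]? = some a
      · obtain ⟨hlt, hget⟩ := List.getElem?_eq_some_iff.mp h
        have hs : (subDFA v).step i a
            = ⟨min (i.val + 1) v.length, Nat.lt_succ_of_le (Nat.min_le_right _ _)⟩ := by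
          simp [subDFA, h]
        rw [hs]
        have hmin : min (i.val + 1) v.length = i.val + 1 := Nat.min_eq_left hlt
        have hdrop : v.drop i.val = a :: v.drop (i.val + 1) := by
          rw [List.drop_eq_getElem_cons hlt, hget]
        simp only [hmin, hdrop]
        exact (List.cons_sublist_cons).symm
      · have hs : (subDFA v).step i a = i := by simp [subDFA, h]
        rw [hs]
        constructor
        · intro hsub; exact hsub.cons a
        · intro hsub
          rcases List.sublist_cons_iff.mp hsub with h' | ⟨r, hr, hrw⟩
          · exact h'
          · exfalso
            by_cases hlt : i.val < v.length
            · rw [List.drop_eq_getElem_cons hlt] at hr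
              have : v[i.val]? = some a := by
                rw [List.getElem?_eq_some_iff]
                exact ⟨hlt, (List.cons.injEq _ _ _ _ ▸ hr).1⟩
              exact h this
            · have : v.drop i.val = [] := List.drop_eq_nil_of_le (Nat.le_of_not_lt hlt)
              rw [this] at hr
              cases hr

theorem isRegular_superwords [DecidableEq T] (v : List T) :
    Language.IsRegular {w : List T | v <+ w} := by
  refine ⟨Fin (v.length + 1), inferInstance, subDFA v, ?_⟩
  ext w
  rw [DFA.mem_accepts]
  have := subDFA_evalFrom v w (subDFA v).start
  simp only [DFA.eval, subDFA] at this ⊢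
  simp at this
  exact this

/-! ### Upward-closed languages are regular (via Higman's lemma) -/

theorem pwo_sublist {σ : Type} [Finite σ] :
    (Set.univ : Set (List σ)).PartiallyWellOrderedOn (· <+ ·) := by
  haveI : IsRefl σ (· = ·) := ⟨fun _ => rfl⟩
  haveI : IsTrans σ (· = ·) := ⟨fun _ _ _ h h' => h.trans h'⟩
  have h1 : (Set.univ : Set σ).PartiallyWellOrderedOn (· = ·) :=
    Set.finite_univ.partiallyWellOrderedOn
  have h2 := h1.partiallyWellOrderedOn_sublistForall₂
  intro g
  obtain ⟨m, n, hmn, hr⟩ := h2 (fun n => ⟨(g n).1, fun x _ => Set.mem_univ x⟩)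
  refine ⟨m, n, hmn, ?_⟩
  obtain ⟨l, hf, hsub⟩ := List.sublistForall₂_iff.mp hr
  have : (g m).1 = l := List.forall₂_eq_eq_eq ▸ hf
  show (g m).1 <+ (g n).1
  rwa [this]

theorem isRegular_of_upwardClosed {σ : Type} [Fintype σ] (S : Set (List σ))
    (hup : ∀ u w, u ∈ S → u <+ w → w ∈ S) : Language.IsRegular S := by
  classical
  set Min : Set (List σ) := {w | w ∈ S ∧ ∀ u ∈ S, u <+ w → u = w} with hMin
  -- Min is an antichain, hence finite by Higman's lemma
  have hanti : IsAntichain (· <+ ·) Min := by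
    intro a ha b hb hne hab
    exact hne (hb.2 a ha.1 hab)
  have hfin : Min.Finite :=
    hanti.finite_of_partiallyWellOrderedOn (pwo_sublist.mono (Set.subset_univ Min))
  -- every element of S has a minimal element of S below it
  have hbelow' : ∀ n (w : List σ), w.length ≤ n → w ∈ S → ∃ v ∈ Min, v <+ w := by
    intro n
    induction n with
    | zero =>
        intro w hlen hw
        refine ⟨w, ⟨hw, fun u hu hsub => ?_⟩, List.Sublist.refl w⟩
        exact hsub.eq_of_length_le (by have := hsub.length_le; omega)
    | succ n ih =>
        intro w hlen hw
        by_cases hmin : ∀ u ∈ S, u <+ w → u = w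
        · exact ⟨w, ⟨hw, hmin⟩, List.Sublist.refl w⟩
        · push_neg at hmin
          obtain ⟨u, hu, husub, hune⟩ := hmin
          have h1 : u.length ≤ n := by
            have h2 := husub.length_le
            rcases Nat.lt_or_ge u.length w.length with h | h
            · omega
            · exact absurd (husub.eq_of_length_le h) hune
          obtain ⟨v, hv, hvsub⟩ := ih u h1 hu
          exact ⟨v, hv, hvsub.trans husub⟩
  have hbelow : ∀ w ∈ S, ∃ v ∈ Min, v <+ w := fun w hw =>
    hbelow' w.length w (le_refl _) hw
  -- S is the union of the superword languages of the minimal elements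
  have hS : S = ⋃ v ∈ hfin.toFinset, {w : List σ | v <+ w} := by
    ext w
    simp only [Set.mem_iUnion, Set.Finite.mem_toFinset, Set.mem_setOf_eq]
    constructor
    · intro hw
      obtain ⟨v, hv, hvs⟩ := hbelow w hw
      exact ⟨v, hv, hvs⟩
    · rintro ⟨v, hv, hvs⟩
      exact hup v w hv.1 hvs
  rw [hS]
  exact isRegular_biUnion _ _ fun v _ => isRegular_superwords v

end MonotoneMatrixAux

/-- Let `f : Σ* → M` map words over a finite alphabet into a finite partial order of
"output matrices", monotonically with respect to the subsequence order on words.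
Then for every `A ∈ M` the preimage of the upward closure of `A` is a regular
language, and consequently the preimage of `A` itself is a regular language. -/
theorem monotone_matrix_preimages_regular {σ M : Type} [Fintype σ] [Fintype M]
    [PartialOrder M] (f : List σ → M)
    (hmono : ∀ h1 h2 : List σ, h1.Sublist h2 → f h1 ≤ f h2) (A : M) :
    Language.IsRegular {w : List σ | A ≤ f w} ∧
      Language.IsRegular {w : List σ | f w = A} := by
  classical
  have hreg : ∀ B : M, Language.IsRegular {w : List σ | B ≤ f w} := fun B =>
    MonotoneMatrixAux.isRegular_of_upwardClosed _
      (fun u w hu huw => le_trans hu (hmono u w huw))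
  refine ⟨hreg A, ?_⟩
  have key : {w : List σ | f w = A}
      = {w : List σ | A ≤ f w} ∩ (⋃ B ∈ Finset.univ.filter (A < ·), {w : List σ | B ≤ f w})ᶜ := by
    ext w
    simp only [Set.mem_inter_iff, Set.mem_compl_iff, Set.mem_iUnion, Set.mem_setOf_eq,
      Finset.mem_filter, Finset.mem_univ, true_and, not_exists]
    constructor
    · rintro rfl
      exact ⟨le_refl _, fun B hB hBf => absurd (le_antisymm hBf hB.le) hB.ne'⟩
    · rintro ⟨hle, hnone⟩
      by_contra hne
      exact hnone (f w) (lt_of_le_of_ne hle (Ne.symm hne)) (le_refl _)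
  rw [key]
  exact MonotoneMatrixAux.isRegular_inter (hreg A)
    (MonotoneMatrixAux.isRegular_compl
      (MonotoneMatrixAux.isRegular_biUnion _ _ fun B _ => hreg B))
end

section
/- Every increasing middlebox (possibly with infinitely many states) can be implemented by a deterministic finite-state transducer; i.e., its forwarding function is realized by a transducer with finitely many states. -/
lemma my_sublist_concat_iff {α : Type*} (m h : List α) (x : α) :
    m.Sublist (h ++ [x]) ↔ m.Sublist h ∨ (m.getLast? = some x ∧ m.dropLast.Sublist h) := by
  constructor
  · intro hm
    rw [List.sublist_append_iff] at hm
    obtain ⟨l₁, l₂, rfl, h₁, h₂⟩ := hm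
    rcases List.sublist_singleton.1 h₂ with rfl | rfl
    · left; simpa using h₁
    · right
      constructor
      · simp
      · simpa [List.dropLast_concat] using h₁
  · rintro (hm | ⟨hl, hd⟩)
    · exact hm.trans (List.sublist_append_left h [x])
    · have := List.dropLast_append_getLast? x hl
      rw [← this]
      exact hd.append (List.Sublist.refl [x])

lemma my_sublist_pwo {α : Type*} [Finite α] (s : Set (List α)) :
    s.PartiallyWellOrderedOn (fun l₁ l₂ => l₁.Sublist l₂) := by
  have h1 : (Set.univ : Set α).PartiallyWellOrderedOn (· = ·) :=
    Set.finite_univ.partiallyWellOrderedOn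
  have h2 := h1.partiallyWellOrderedOn_sublistForall₂ (· = ·)
  have h3 : s.PartiallyWellOrderedOn (List.SublistForall₂ (· = ·)) := by
    refine Set.PartiallyWellOrderedOn.mono h2 ?_
    intro l _; simp
  intro g
  obtain ⟨i, j, hij, hr⟩ := h3 g
  refine ⟨i, j, hij, ?_⟩
  have hr : List.SublistForall₂ (· = ·) (g i).1 (g j).1 := hr
  show (g i).1.Sublist (g j).1
  rw [List.sublistForall₂_iff] at hr
  obtain ⟨l, hl1, hl2⟩ := hr
  have : (g i).1 = l := by rw [List.forall₂_eq_eq_eq] at hl1; exact hl1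
  rwa [this]

/-- existence of a minimal sublist in a set -/
lemma my_exists_minimal {α : Type*} (U : Set (List α)) {h : List α} (hh : h ∈ U) :
    ∃ m, m.Sublist h ∧ m ∈ U ∧ ∀ m' ∈ U, m'.Sublist m → m' = m := by
  have key : ∀ n (l : List α), l.length ≤ n → l ∈ U →
      ∃ m, m.Sublist l ∧ m ∈ U ∧ ∀ m' ∈ U, m'.Sublist m → m' = m := by
    intro n
    induction n with
    | zero =>
      intro l hl hlU
      refine ⟨l, List.Sublist.refl l, hlU, ?_⟩
      intro m' _ hm'
      exact hm'.eq_of_length (le_antisymm hm'.length_le (by omega))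
    | succ n ih =>
      intro l hl hlU
      by_cases hmin : ∀ m' ∈ U, m'.Sublist l → m' = l
      · exact ⟨l, List.Sublist.refl l, hlU, hmin⟩
      · push_neg at hmin
        obtain ⟨m', hm'U, hm'l, hne⟩ := hmin
        have hlt : m'.length < l.length :=
          lt_of_le_of_ne hm'l.length_le (fun he => hne (hm'l.eq_of_length he))
        obtain ⟨m, hm1, hm2, hm3⟩ := ih m' (by omega) hm'U
        exact ⟨m, hm1.trans hm'l, hm2, hm3⟩
  exact key h.length h le_rfl hh


/-- generic tracking of a foldl by a semantic function -/
lemma my_foldl_track {Q σ β : Type*} (g : Q → σ → Q) (q0 : Q) (st : Q → β)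
    (step : β → σ → β) (T : List σ → β) (h0 : st q0 = T [])
    (hst : ∀ q x, st (g q x) = step (st q) x)
    (hT : ∀ h x, T (h ++ [x]) = step (T h) x) :
    ∀ h : List σ, st (h.foldl g q0) = T h := by
  intro h
  induction h using List.reverseRecOn with
  | nil => simpa using h0
  | append_singleton h x ih =>
    rw [List.foldl_append, List.foldl_cons, List.foldl_nil, hst, ih, hT]

/-- Every increasing middlebox (possibly with infinitely many states), with finite
input alphabet `P × Pr` and outputs in `2^(P × Pr)`, can be implemented by a
deterministic finite-state transducer: there is a transducer with finitely many
states such that running it on any history `h` and then reading an input `a`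
produces exactly the output `f h a` of the forwarding function. -/
theorem increasing_middlebox_has_finite_state_implementation
    {P Pr : Type} [Fintype P] [Fintype Pr]
    (f : List (P × Pr) → (P × Pr) → Set (P × Pr))
    (hinc : ∀ (h1 h2 : List (P × Pr)) (a : P × Pr),
      h1.Sublist h2 → f h1 a ⊆ f h2 a) :
    ∃ (Q : Type) (_ : Fintype Q) (q0 : Q) (δ : Q → (P × Pr) → Set (P × Pr) × Q),
      ∀ (h : List (P × Pr)) (a : P × Pr),
        (δ (h.foldl (fun q x => (δ q x).2) q0) a).1 = f h a := by
  classical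
  -- the sets of minimal histories for each (input, output-packet) pair
  set M : (P × Pr) → (P × Pr) → Set (List (P × Pr)) := fun a b =>
    {m | b ∈ f m a ∧ ∀ m', b ∈ f m' a → m'.Sublist m → m' = m} with hM
  have hMfin : ∀ a b, (M a b).Finite := by
    intro a b
    refine IsAntichain.finite_of_partiallyWellOrderedOn (r := fun l₁ l₂ => l₁.Sublist l₂)
      ?_ (my_sublist_pwo _)
    intro m₁ h₁ m₂ h₂ hne hsub
    exact hne (h₂.2 m₁ h₁.1 hsub)
  -- the uniform bound on lengths of minimal histories
  set N : ℕ := Finset.univ.sup (fun ab : (P × Pr) × (P × Pr) => ((hMfin ab.1 ab.2).toFinset.sup List.length))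
    with hN
  have hbound : ∀ a b m, m ∈ M a b → m.length ≤ N := by
    intro a b m hm
    calc m.length ≤ (hMfin a b).toFinset.sup List.length :=
          Finset.le_sup ((hMfin a b).mem_toFinset.2 hm)
      _ ≤ N := Finset.le_sup (f := fun ab : (P × Pr) × (P × Pr) => ((hMfin ab.1 ab.2).toFinset.sup List.length))
          (Finset.mem_univ (a, b))
  -- states: subsets of the finite set of lists of length ≤ N
  set LN : Finset (List (P × Pr)) := (List.finite_length_le (P × Pr) N).toFinset with hLN
  have hLNmem : ∀ m : List (P × Pr), m ∈ LN ↔ m.length ≤ N := by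
    intro m; rw [hLN, Set.Finite.mem_toFinset]; rfl
  -- the abstract transition and output functions on finsets of histories
  set step : Finset (List (P × Pr)) → (P × Pr) → Finset (List (P × Pr)) := fun S x =>
    LN.filter (fun m => m ∈ S ∨ (m.getLast? = some x ∧ m.dropLast ∈ S)) with hstepdef
  set out : Finset (List (P × Pr)) → (P × Pr) → Set (P × Pr) := fun S x => {b | ∃ m ∈ S, b ∈ f m x} with houtdef
  -- semantic invariant target
  set T : List (P × Pr) → Finset (List (P × Pr)) := fun h => LN.filter (fun m => m.Sublist h) with hT
  have hT0 : T [] = {[]} := by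
    ext m
    simp only [hT, Finset.mem_singleton, Finset.mem_filter, List.sublist_nil, hLNmem]
    constructor
    · rintro ⟨_, rfl⟩; rfl
    · rintro rfl; simp
  have hTstep : ∀ h x, T (h ++ [x]) = step (T h) x := by
    intro h x
    ext m
    simp only [hT, hstepdef, Finset.mem_filter, my_sublist_concat_iff]
    constructor
    · rintro ⟨hm, hs | ⟨hl, hd⟩⟩
      · exact ⟨hm, Or.inl ⟨hm, hs⟩⟩
      · refine ⟨hm, Or.inr ⟨hl, ?_, hd⟩⟩
        rw [hLNmem] at hm ⊢
        exact le_trans m.dropLast_sublist.length_le hm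
    · rintro ⟨hm, ⟨_, hs⟩ | ⟨hl, _, hd⟩⟩
      · exact ⟨hm, Or.inl hs⟩
      · exact ⟨hm, Or.inr ⟨hl, hd⟩⟩
  -- correctness of the output on the semantic states
  have hcorrect : ∀ (h : List (P × Pr)) (a : (P × Pr)), out (T h) a = f h a := by
    intro h a
    ext b
    simp only [houtdef, hT, Set.mem_setOf_eq, Finset.mem_filter]
    constructor
    · rintro ⟨m, ⟨_, hsub⟩, hb⟩
      exact hinc m h a hsub hb
    · intro hb
      obtain ⟨m, hsub, hmU, hmin⟩ := my_exists_minimal {m | b ∈ f m a} hb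
      have hmM : m ∈ M a b := ⟨hmU, hmin⟩
      exact ⟨m, ⟨(hLNmem m).2 (hbound a b m hmM), hsub⟩, hmU⟩
  -- the main argument, with the transducer abstracted by its defining equations
  have main : ∀ (q0 : {S : Finset (List (P × Pr)) // S ∈ LN.powerset})
      (δ : {S : Finset (List (P × Pr)) // S ∈ LN.powerset} → (P × Pr) →
        Set (P × Pr) × {S : Finset (List (P × Pr)) // S ∈ LN.powerset}),
      q0.1 = {[]} →
      (∀ q x, (δ q x).1 = out q.1 x) →
      (∀ q x, ((δ q x).2).1 = step q.1 x) →
      ∀ (h : List (P × Pr)) (a : (P × Pr)), (δ (h.foldl (fun q x => (δ q x).2) q0) a).1 = f h a := by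
    intro q0 δ hq0 hout hnext h a
    have hinv := my_foldl_track (fun q x => (δ q x).2) q0
      (fun q => q.1) step T (show q0.1 = T [] by rw [hq0, hT0]) (fun q x => hnext q x) hTstep h
    rw [hout, hinv, hcorrect]
  refine ⟨{S : Finset (List (P × Pr)) // S ∈ LN.powerset}, inferInstance,
    ⟨{[]}, Finset.mem_powerset.2 (by simp [hLNmem])⟩,
    fun S x => (out S.1 x, ⟨step S.1 x, Finset.mem_powerset.2 (Finset.filter_subset _ _)⟩),
    ?_⟩
  intro h a
  exact main _ (fun S x => (out S.1 x,
    ⟨step S.1 x, Finset.mem_powerset.2 (Finset.filter_subset _ _)⟩))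
    rfl (fun _ _ => rfl) (fun _ _ => rfl) h a
end

section
/- Every increasing middlebox is progressing: in any deterministic transducer implementing an increasing forwarding function, if a reachable state q transitions (possibly via a nonempty history) to a state q' not equivalent to q, then no extension of the run from q' can reach a state equivalent to q. Equivalently, a minimal deterministic transducer implementing an increasing forwarding function has no cycle through two non-equivalent states. -/
/-- The state reached by a deterministic transducer `δ` from state `q` after
reading the word `w`. -/
def runT {Q A G : Type} (δ : Q → A → G × Q) (q : Q) (w : List A) : Q :=
  w.foldl (fun q' a => (δ q' a).2) q

/-- Two states of a deterministic transducer are equivalent if they induce the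
same input/output behaviour. -/
def equivT {Q A G : Type} (δ : Q → A → G × Q) (q1 q2 : Q) : Prop :=
  ∀ (w : List A) (a : A), (δ (runT δ q1 w) a).1 = (δ (runT δ q2 w) a).1

theorem runT_append {Q A G : Type} (δ : Q → A → G × Q) (q : Q) (x y : List A) :
    runT δ q (x ++ y) = runT δ (runT δ q x) y := by
  simp [runT, List.foldl_append]

/-- Every increasing middlebox is progressing: in any deterministic transducer
realizing an increasing forwarding function (monotone under the subsequence order
on histories), if a reachable state `q` transitions (via some history `u`) to a
state not equivalent to `q`, then no further extension `v` of the run can reach a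
state equivalent to `q`. -/
theorem increasing_implies_progressing {Q A X : Type}
    (δ : Q → A → Set X × Q) (q0 : Q)
    (hinc : ∀ (h1 h2 : List A) (a : A), h1.Sublist h2 →
      (δ (runT δ q0 h1) a).1 ⊆ (δ (runT δ q0 h2) a).1) :
    ∀ (h0 u v : List A),
      ¬ equivT δ (runT δ q0 h0) (runT δ (runT δ q0 h0) u) →
      ¬ equivT δ (runT δ (runT δ (runT δ q0 h0) u) v) (runT δ q0 h0) := by

  intro h0 u v hne heq
  apply hne
  intro w a
  apply Set.Subset.antisymm
  · simp only [← runT_append, List.append_assoc]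
    exact hinc (h0 ++ w) (h0 ++ (u ++ w)) a
      (List.Sublist.append (List.Sublist.refl h0) (List.sublist_append_right u w))
  · have h1 : (δ (runT δ (runT δ (runT δ q0 h0) u) w) a).1 ⊆
        (δ (runT δ (runT δ (runT δ (runT δ q0 h0) u) v) w) a).1 := by
      simp only [← runT_append, List.append_assoc]
      exact hinc (h0 ++ (u ++ w)) (h0 ++ (u ++ (v ++ w))) a
        (List.Sublist.append (List.Sublist.refl h0)
          (List.Sublist.append (List.Sublist.refl u) (List.sublist_append_right v w)))
    rw [heq w a] at h1
    exact h1
end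

section
/- Every finite-state progressing middlebox has an implementation as a finite-state transducer whose underlying state graph, after removing self-loops, is acyclic (a DAG); in particular, a minimal deterministic transducer of a progressing middlebox has no directed cycle visiting two states with different languages. -/
/-- `realizes δ q w o` holds if the nondeterministic transducer with transition
relation `δ` has a run from state `q` reading input word `w` and producing
output word `o`. The language of a state `q` is `{(w, o) | realizes δ q w o}`. -/
def realizes {Q A G : Type} (δ : Q → A → Set (G × Q)) : Q → List A → List G → Prop
  | _, [], o => o = []
  | q, a :: w, o => ∃ g q' o', (g, q') ∈ δ q a ∧ o = g :: o' ∧ realizes δ q' w o'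

/-- Two states are equivalent if they have the same language. -/
def eqvStates {Q A G : Type} (δ : Q → A → Set (G × Q)) (q1 q2 : Q) : Prop :=
  ∀ (w : List A) (o : List G), realizes δ q1 w o ↔ realizes δ q2 w o

/-- One-step reachability in the underlying state graph of the transducer. -/
def stepRel {Q A G : Type} (δ : Q → A → Set (G × Q)) (q q' : Q) : Prop :=
  ∃ (a : A) (g : G), (g, q') ∈ δ q a

/-- Reachability (any number of steps) in the underlying state graph. -/
def reachRel {Q A G : Type} (δ : Q → A → Set (G × Q)) : Q → Q → Prop :=
  Relation.ReflTransGen (stepRel δ)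

section Aux

variable {Q A G : Type} (δ : Q → A → Set (G × Q))

/-- Mutual reachability relation. -/
def mReach (q q' : Q) : Prop := reachRel δ q q' ∧ reachRel δ q' q

/-- Mutual reachability is an equivalence relation. -/
def mSetoid : Setoid Q :=
  ⟨mReach δ, ⟨fun _ => ⟨Relation.ReflTransGen.refl, Relation.ReflTransGen.refl⟩,
    fun h => ⟨h.2, h.1⟩,
    fun h1 h2 => ⟨Relation.ReflTransGen.trans h1.1 h2.1,
      Relation.ReflTransGen.trans h2.2 h1.2⟩⟩⟩

/-- The quotient transducer (SCC condensation with union transitions). -/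
def qd : Quotient (mSetoid δ) → A → Set (G × Quotient (mSetoid δ)) :=
  fun c a => {x | ∃ p q', Quotient.mk (mSetoid δ) p = c ∧ (x.1, q') ∈ δ p a ∧
    x.2 = Quotient.mk (mSetoid δ) q'}

theorem realizes_to_quot (q : Q) (w : List A) (o : List G)
    (h : realizes δ q w o) : realizes (qd δ) (Quotient.mk (mSetoid δ) q) w o := by
  induction w generalizing q o with
  | nil => exact h
  | cons a w ih =>
    obtain ⟨g, q', o', hmem, rfl, hr⟩ := h
    exact ⟨g, Quotient.mk (mSetoid δ) q', o', ⟨q, q', rfl, hmem, rfl⟩, rfl, ih q' o' hr⟩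

theorem reach_quot (x : Q) (c : Quotient (mSetoid δ))
    (h : reachRel (qd δ) (Quotient.mk (mSetoid δ) x) c) :
    ∃ y : Q, c = Quotient.mk (mSetoid δ) y ∧ reachRel δ x y := by
  induction h with
  | refl => exact ⟨x, rfl, Relation.ReflTransGen.refl⟩
  | tail _ hstep ih =>
    obtain ⟨y, rfl, hxy⟩ := ih
    obtain ⟨a, g, p, q', hp, hmem, hq'⟩ := hstep
    have hyp : mReach δ y p := Quotient.exact hp.symm
    refine ⟨q', hq', Relation.ReflTransGen.tail (Relation.ReflTransGen.trans hxy hyp.1) ?_⟩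
    exact ⟨a, g, hmem⟩

end Aux

/-- Every finite-state progressing middlebox (once a reachable state changes to a
non-equivalent state, no continuation returns to an equivalent state) has an
implementation as a finite-state transducer with the same input/output language
whose underlying state graph, after removing self-loops, is acyclic: any directed
cycle of the new transducer through a reachable state stays at that state. -/
theorem progressing_has_dag_implementation {Q A G : Type} [Fintype Q]
    (δ : Q → A → Set (G × Q)) (q0 : Q)
    (hprog : ∀ q q' q'' : Q, reachRel δ q0 q → reachRel δ q q' →
      ¬ eqvStates δ q q' → reachRel δ q' q'' → ¬ eqvStates δ q'' q) :
    ∃ (Q' : Type) (_ : Fintype Q') (δ' : Q' → A → Set (G × Q')) (q0' : Q'),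
      (∀ (w : List A) (o : List G), realizes δ q0 w o ↔ realizes δ' q0' w o) ∧
      (∀ q q' : Q', reachRel δ' q0' q → reachRel δ' q q' → reachRel δ' q' q →
        q = q') := by
  classical
  -- reachable, mutually reachable states are equivalent
  have heqv : ∀ q p : Q, reachRel δ q0 q → mReach δ q p → eqvStates δ q p := by
    intro q p hq hm
    by_contra hne
    exact hprog q p q hq hm.1 hne hm.2 (fun w o => Iff.rfl)
  -- backward language preservation
  have hback : ∀ (w : List A) (q : Q) (o : List G), reachRel δ q0 q →
      realizes (qd δ) (Quotient.mk (mSetoid δ) q) w o → realizes δ q w o := by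
    intro w
    induction w with
    | nil => intro q o _ h; exact h
    | cons a w ih =>
      intro q o hq h
      obtain ⟨g, c', o', hmem, rfl, hr⟩ := h
      obtain ⟨p, q', hp, hm, hq'⟩ := hmem
      have hqp : mReach δ q p := Quotient.exact hp.symm
      have hpreach : reachRel δ q0 p := Relation.ReflTransGen.trans hq hqp.1
      have hq'reach : reachRel δ q0 q' :=
        Relation.ReflTransGen.tail hpreach ⟨a, g, hm⟩
      have hrq' : realizes δ q' w o' := by
        apply ih q' o' hq'reach
        rw [← hq']; exact hr
      have hrp : realizes δ p (a :: w) (g :: o') := ⟨g, q', o', hm, rfl, hrq'⟩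
      exact (heqv q p hq hqp (a :: w) (g :: o')).mpr hrp
  refine ⟨Quotient (mSetoid δ), Fintype.ofFinite _, qd δ, Quotient.mk (mSetoid δ) q0,
    fun w o => ⟨realizes_to_quot δ q0 w o, hback w q0 o Relation.ReflTransGen.refl⟩,
    ?_⟩
  -- the condensation is a DAG (no use of hprog needed)
  intro c c' _ hcc' hc'c
  obtain ⟨x, rfl⟩ := Quotient.exists_rep c
  obtain ⟨y, rfl, hxy⟩ := reach_quot δ x _ hcc'
  obtain ⟨z, hz, hyz⟩ := reach_quot δ y _ hc'c
  have hzx : mReach δ z x := Quotient.exact hz.symm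
  have hyx : reachRel δ y x := Relation.ReflTransGen.trans hyz hzx.1
  apply Quotient.sound
  exact ⟨hxy, hyx⟩
end

section
/- In a minimal deterministic finite transducer, if there is a directed cycle through two distinct (hence non-equivalent) states, then the realized forwarding function is not increasing with respect to the subsequence order on histories. -/
/-- In a minimal deterministic finite transducer (distinct states have distinct
languages), if there is a directed cycle through two distinct states (both
reachable), then the realized forwarding function is not increasing with respect
to the subsequence order on histories. -/
theorem cycle_in_minimal_transducer_not_increasing {Q A X : Type} [Fintype Q]
    (δ : Q → A → Set X × Q) (q0 : Q)
    (hmin : ∀ q1 q2 : Q, equivT δ q1 q2 → q1 = q2)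
    (q1 q2 : Q) (hne : q1 ≠ q2)
    (w1 : List A) (hreach : runT δ q0 w1 = q1)
    (u v : List A) (hu : runT δ q1 u = q2) (hv : runT δ q2 v = q1) :
    ¬ (∀ (h1 h2 : List A) (a : A), h1.Sublist h2 →
        (δ (runT δ q0 h1) a).1 ⊆ (δ (runT δ q0 h2) a).1) := by
  intro hinc
  apply hne
  apply hmin
  intro w a
  have hrun : ∀ (q : Q) (p r : List A), runT δ q (p ++ r) = runT δ (runT δ q p) r := by
    intro q p r; simp [runT, List.foldl_append]
  apply Set.Subset.antisymm
  · have h := hinc (w1 ++ w) (w1 ++ (u ++ w)) a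
      ((List.append_sublist_append_left w1).2 (List.sublist_append_right u w))
    simpa only [hrun, hreach, hu, hv] using h
  · have h := hinc (w1 ++ (u ++ w)) (w1 ++ (u ++ (v ++ w))) a
      ((List.append_sublist_append_left w1).2
        ((List.append_sublist_append_left u).2 (List.sublist_append_right v w)))
    simpa only [hrun, hreach, hu, hv] using h
end

section
/- In an increasing network under the FIFO semantics, if there is a run from the initial configuration whose last step is middlebox m receiving packet p on port pr, then from any reachable configuration there exists a continuation run whose last step is m receiving p on pr, or a continuation run reaching an abort state. -/
/-- A network configuration under the FIFO semantics: the state of every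
middlebox, and the (ordered) sequence of pending packets on every directed
channel `(u, v)`. -/
structure CfgF (V P Q : Type) where
  st : V → Q
  chan : V → V → List P

/-- A network configuration under the unordered semantics: the state of every
middlebox, and the multiset of pending packets on every directed channel. -/
structure CfgU (V P Q : Type) where
  st : V → Q
  chan : V → V → Multiset P

/-- Forgetting the order of the packets on each channel. -/
def toU {V P Q : Type} (c : CfgF V P Q) : CfgU V P Q :=
  ⟨c.st, fun u v => ↑(c.chan u v)⟩

/-- A step of the FIFO semantics: either a host sends one of its allowed packets
(appended to the tail of the corresponding channel), or a middlebox `m` processes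
the packet at the head of one of its ingress channels, changing its state and
appending the produced packets to the tails of its egress channels, according to
a transition `(q', out) ∈ δ m (state of m) (sender) (packet)`. -/
def stepF {V P Q : Type} [DecidableEq V] (isHost : V → Prop) (allowed : V → Set P)
    (δ : V → Q → V → P → Set (Q × (V → Multiset P)))
    (c c' : CfgF V P Q) : Prop :=
  (∃ h u p, isHost h ∧ p ∈ allowed h ∧ c'.st = c.st ∧
    c'.chan = fun a b => if a = h ∧ b = u then c.chan a b ++ [p] else c.chan a b) ∨
  (∃ m v p rest q' out, ∃ lout : V → List P, ¬ isHost m ∧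
    c.chan v m = p :: rest ∧ (q', out) ∈ δ m (c.st m) v p ∧
    (∀ u, (↑(lout u) : Multiset P) = out u) ∧
    c'.st = Function.update c.st m q' ∧
    c'.chan = fun a b =>
      if a = v ∧ b = m then rest
      else if a = m then c.chan a b ++ lout b
      else c.chan a b)

/-- A step of the unordered semantics: either a host sends one of its allowed
packets, or a middlebox processes an arbitrary pending packet from one of its
ingress channels. -/
def stepU {V P Q : Type} [DecidableEq V] [DecidableEq P]
    (isHost : V → Prop) (allowed : V → Set P)
    (δ : V → Q → V → P → Set (Q × (V → Multiset P)))
    (c c' : CfgU V P Q) : Prop :=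
  (∃ h u p, isHost h ∧ p ∈ allowed h ∧ c'.st = c.st ∧
    c'.chan = fun a b => if a = h ∧ b = u then p ::ₘ c.chan a b else c.chan a b) ∨
  (∃ m v p q' out, ¬ isHost m ∧
    p ∈ c.chan v m ∧ (q', out) ∈ δ m (c.st m) v p ∧
    c'.st = Function.update c.st m q' ∧
    c'.chan = fun a b =>
      if a = v ∧ b = m then (c.chan v m).erase p
      else if a = m then c.chan a b + out b
      else c.chan a b)

/-- The initial FIFO configuration: all channels empty, all middleboxes in their
initial states. -/
def initF {V P Q : Type} (q0 : V → Q) : CfgF V P Q := ⟨q0, fun _ _ => []⟩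

/-- The initial unordered configuration. -/
def initU {V P Q : Type} (q0 : V → Q) : CfgU V P Q := ⟨q0, fun _ _ => 0⟩

/-- An abort configuration under the FIFO semantics: some middlebox has a packet
at the head of an ingress channel on which its transition relation is undefined. -/
def abortF {V P Q : Type} (isHost : V → Prop)
    (δ : V → Q → V → P → Set (Q × (V → Multiset P))) (c : CfgF V P Q) : Prop :=
  ∃ m v p rest, ¬ isHost m ∧ c.chan v m = p :: rest ∧ δ m (c.st m) v p = ∅

/-- An abort configuration under the unordered semantics: some middlebox has a
pending packet on which its transition relation is undefined. -/
def abortU {V P Q : Type} (isHost : V → Prop)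
    (δ : V → Q → V → P → Set (Q × (V → Multiset P))) (c : CfgU V P Q) : Prop :=
  ∃ m v p, ¬ isHost m ∧ p ∈ c.chan v m ∧ δ m (c.st m) v p = ∅


/-- The transition relation of an increasing middlebox determined by a forwarding
function `f` on histories: the state of middlebox `m` is its history of received
packets (with sender), processing a packet appends it to the history and emits
the outputs `f m h (v, p)`; `none` means the forwarding function is undefined
(abort). -/
def deltaOf {V P : Type} (f : V → List (V × P) → V × P → Option (V → Multiset P))
    (m : V) (h : List (V × P)) (v : V) (p : P) :
    Set (List (V × P) × (V → Multiset P)) :=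
  match f m h (v, p) with
  | none => ∅
  | some out => {(h ++ [(v, p)], out)}

/-- A network is increasing when each middlebox's forwarding function is monotone
with respect to the subsequence order on histories: extending the history can
only enlarge the output multiset on every egress channel. -/
def Increasing {V P : Type} (f : V → List (V × P) → V × P → Option (V → Multiset P)) : Prop :=
  ∀ (m : V) (h1 h2 : List (V × P)) (a : V × P) (o1 o2 : V → Multiset P),
    h1.Sublist h2 → f m h1 a = some o1 → f m h2 a = some o2 → ∀ u, o1 u ≤ o2 u

/-- The FIFO step in which middlebox `m` receives (processes) packet `p` from the
head of its ingress channel from `v`. -/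
def recvStepF {V P : Type} [DecidableEq V] (isHost : V → Prop)
    (δ : V → List (V × P) → V → P → Set (List (V × P) × (V → Multiset P)))
    (m v : V) (p : P) (c c' : CfgF V P (List (V × P))) : Prop :=
  ∃ rest q' out, ∃ lout : V → List P, ¬ isHost m ∧
    c.chan v m = p :: rest ∧ (q', out) ∈ δ m (c.st m) v p ∧
    (∀ u, (↑(lout u) : Multiset P) = out u) ∧
    c'.st = Function.update c.st m q' ∧
    c'.chan = fun a b =>
      if a = v ∧ b = m then rest
      else if a = m then c.chan a b ++ lout b
      else c.chan a b


section AuxProof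
variable {V P : Type} [DecidableEq V] [DecidableEq P]
variable (isHost : V → Prop) (allowed : V → Set P)
variable (f : V → List (V × P) → V × P → Option (V → Multiset P))

/-- Domination: every state and channel content of `d` is a sublist of that of `c`. -/
def DomF (d c : CfgF V P (List (V × P))) : Prop :=
  (∀ w, (d.st w).Sublist (c.st w)) ∧ ∀ u w, (d.chan u w).Sublist (c.chan u w)

lemma mem_deltaOf {m : V} {h : List (V × P)} {v : V} {p : P} {q' : List (V × P)}
    {out : V → Multiset P} :
    (q', out) ∈ deltaOf f m h v p ↔ f m h (v, p) = some out ∧ q' = h ++ [(v, p)] := by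
  cases hf : f m h (v, p) with
  | none => simp [deltaOf, hf]
  | some o =>
    simp only [deltaOf, hf, Set.mem_singleton_iff, Prod.mk.injEq, Option.some.injEq]
    exact ⟨fun ⟨x, y⟩ => ⟨y.symm, x⟩, fun ⟨x, y⟩ => ⟨y, x.symm⟩⟩

lemma cons_sublist_decomp {α : Type*} {a : α} {l l' : List α} (h : (a :: l).Sublist l') :
    ∃ s t, l' = s ++ a :: t ∧ l.Sublist t := by
  rw [List.cons_sublist_iff] at h
  obtain ⟨r₁, r₂, rfl, hmem, hsub⟩ := h
  obtain ⟨s, t, rfl⟩ := List.append_of_mem hmem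
  exact ⟨s, t ++ r₂, by simp, hsub.trans (List.sublist_append_right _ _)⟩

lemma recvStepF_stepF {m v : V} {p : P} {c c' : CfgF V P (List (V × P))}
    (h : recvStepF isHost (deltaOf f) m v p c c') :
    stepF isHost allowed (deltaOf f) c c' := by
  obtain ⟨rest, q', out, lout, h1, h2, h3, h4, h5, h6⟩ := h
  exact Or.inr ⟨m, v, p, rest, q', out, lout, h1, h2, h3, h4, h5, h6⟩

/-- Flushing the packets in front of `tail` on channel `u → w`: either we abort,
or we reach a configuration where the channel is exactly `tail`, states have only
grown (as supersequences) and other channels have only grown at the tail. -/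
lemma clearLemma : ∀ (pre : List P) (c : CfgF V P (List (V × P))) (u w : V) (tail : List P),
    ¬ isHost w → c.chan u w = pre ++ tail →
    ∃ c1, Relation.ReflTransGen (stepF isHost allowed (deltaOf f)) c c1 ∧
      (abortF isHost (deltaOf f) c1 ∨
        (c1.chan u w = tail ∧ (∀ a, (c.st a).Sublist (c1.st a)) ∧
          ∀ a b, ¬ (a = u ∧ b = w) → (c.chan a b).Sublist (c1.chan a b))) := by
  intro pre
  induction pre with
  | nil =>
    intro c u w tail hw hch
    exact ⟨c, .refl, Or.inr ⟨hch, fun a => List.Sublist.refl _,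
      fun a b _ => List.Sublist.refl _⟩⟩
  | cons x pre ih =>
    intro c u w tail hw hch
    cases hf : f w (c.st w) (u, x) with
    | none =>
      refine ⟨c, .refl, Or.inl ⟨w, u, x, pre ++ tail, hw, hch, ?_⟩⟩
      simp [deltaOf, hf]
    | some o =>
      obtain ⟨c1, hrun, hres⟩ := ih ⟨Function.update c.st w (c.st w ++ [(u, x)]),
          fun a b => if a = u ∧ b = w then pre ++ tail
            else if a = w then c.chan a b ++ (o b).toList else c.chan a b⟩
          u w tail hw (by simp)
      have hstep : stepF isHost allowed (deltaOf f) c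
          ⟨Function.update c.st w (c.st w ++ [(u, x)]),
           fun a b => if a = u ∧ b = w then pre ++ tail
             else if a = w then c.chan a b ++ (o b).toList else c.chan a b⟩ :=
        Or.inr ⟨w, u, x, pre ++ tail, c.st w ++ [(u, x)], o, fun b => (o b).toList,
          hw, hch, mem_deltaOf f |>.mpr ⟨hf, rfl⟩,
          fun b => Multiset.coe_toList _, rfl, rfl⟩
      refine ⟨c1, .head hstep hrun, ?_⟩
      rcases hres with h | ⟨h1, h2, h3⟩
      · exact Or.inl h
      refine Or.inr ⟨h1, fun a => ?_, fun a b hab => ?_⟩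
      · refine List.Sublist.trans ?_ (h2 a)
        by_cases ha : a = w
        · subst ha
          simp only [Function.update_self]
          exact List.sublist_append_left _ _
        · simp [Function.update_of_ne ha]
      · refine List.Sublist.trans ?_ (h3 a b hab)
        simp only
        rw [if_neg hab]
        by_cases ha : a = w
        · subst ha
          rw [if_pos rfl]
          exact List.sublist_append_left _ _
        · rw [if_neg ha]

/-- Simulation of a receive step of the dominated run. -/
lemma sim_recv (hinc : Increasing f) {w u : V} {p' : P} {d d' c : CfgF V P (List (V × P))}
    (hdom : DomF d c)
    (hrecv : recvStepF isHost (deltaOf f) w u p' d d') :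
    ∃ c1, Relation.ReflTransGen (stepF isHost allowed (deltaOf f)) c c1 ∧
      (abortF isHost (deltaOf f) c1 ∨
        ∃ c2, recvStepF isHost (deltaOf f) w u p' c1 c2 ∧ DomF d' c2) := by
  obtain ⟨drest, q1, o1, lout1, hw, hdch, hmem, hlout1, hdst', hdch'⟩ := hrecv
  rw [mem_deltaOf] at hmem
  obtain ⟨hf1, hq1⟩ := hmem
  have hsubc : (p' :: drest).Sublist (c.chan u w) := hdch ▸ hdom.2 u w
  obtain ⟨pre, rest', hceq, hdrest⟩ := cons_sublist_decomp hsubc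
  obtain ⟨c1, hrun, hres⟩ := clearLemma isHost allowed f pre c u w (p' :: rest') hw hceq
  refine ⟨c1, hrun, ?_⟩
  rcases hres with habort | ⟨h1, h2, h3⟩
  · exact Or.inl habort
  cases hf2 : f w (c1.st w) (u, p') with
  | none =>
    exact Or.inl ⟨w, u, p', rest', hw, h1, by simp [deltaOf, hf2]⟩
  | some o2 =>
    have hstw : (d.st w).Sublist (c1.st w) := (hdom.1 w).trans (h2 w)
    have hle : ∀ b, o1 b ≤ o2 b := hinc w (d.st w) (c1.st w) (u, p') o1 o2 hstw hf1 hf2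
    refine Or.inr ⟨⟨Function.update c1.st w (c1.st w ++ [(u, p')]),
      fun a b => if a = u ∧ b = w then rest'
        else if a = w then c1.chan a b ++ (lout1 b ++ (o2 b - o1 b).toList)
        else c1.chan a b⟩, ?_, ?_, ?_⟩
    · refine ⟨rest', c1.st w ++ [(u, p')], o2, fun b => lout1 b ++ (o2 b - o1 b).toList,
        hw, h1, (mem_deltaOf f).mpr ⟨hf2, rfl⟩, fun b => ?_, rfl, rfl⟩
      have hco : (↑(lout1 b ++ (o2 b - o1 b).toList) : Multiset P)
          = ↑(lout1 b) + ↑((o2 b - o1 b).toList) := rfl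
      rw [hco, hlout1 b, Multiset.coe_toList, add_tsub_cancel_of_le (hle b)]
    · intro a
      rw [hdst']
      by_cases ha : a = w
      · subst ha
        simp only [Function.update_self]
        rw [hq1]
        exact hstw.append (List.Sublist.refl _)
      · simp only [Function.update_of_ne ha]
        exact (hdom.1 a).trans (h2 a)
    · intro a b
      rw [hdch']
      simp only
      by_cases hab : a = u ∧ b = w
      · rw [if_pos hab, if_pos hab]; exact hdrest
      · rw [if_neg hab, if_neg hab]
        by_cases ha : a = w
        · subst ha
          rw [if_pos rfl, if_pos rfl]
          refine (((hdom.2 _ b).trans (h3 _ b hab)).append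
            (List.Sublist.refl (lout1 b))).trans ?_
          rw [← List.append_assoc]
          exact List.sublist_append_left _ _
        · rw [if_neg ha, if_neg ha]
          exact (hdom.2 a b).trans (h3 a b hab)

/-- Simulation of an arbitrary step of the dominated run. -/
lemma sim_step (hinc : Increasing f) {d d' c : CfgF V P (List (V × P))}
    (hdom : DomF d c) (hstep : stepF isHost allowed (deltaOf f) d d') :
    ∃ c1, Relation.ReflTransGen (stepF isHost allowed (deltaOf f)) c c1 ∧
      (abortF isHost (deltaOf f) c1 ∨ DomF d' c1) := by
  rcases hstep with ⟨h, u, p, hh, hp, hst, hch⟩ |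
    ⟨w, u, p', drest, q1, o1, lout1, hw, hdch, hmem, hlout1, hdst', hdch'⟩
  · refine ⟨⟨c.st, fun a b => if a = h ∧ b = u then c.chan a b ++ [p] else c.chan a b⟩,
      Relation.ReflTransGen.single (Or.inl ⟨h, u, p, hh, hp, rfl, rfl⟩),
      Or.inr ⟨fun a => ?_, fun a b => ?_⟩⟩
    · rw [hst]; exact hdom.1 a
    · rw [hch]
      simp only
      by_cases hab : a = h ∧ b = u
      · rw [if_pos hab, if_pos hab]
        exact (hdom.2 a b).append (List.Sublist.refl _)
      · rw [if_neg hab, if_neg hab]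
        exact hdom.2 a b
  · have hrecv : recvStepF isHost (deltaOf f) w u p' d d' :=
      ⟨drest, q1, o1, lout1, hw, hdch, hmem, hlout1, hdst', hdch'⟩
    obtain ⟨c1, hrun, hres⟩ := sim_recv isHost allowed f hinc hdom hrecv
    rcases hres with h | ⟨c2, hstep2, hdom2⟩
    · exact ⟨c1, hrun, Or.inl h⟩
    · exact ⟨c2, hrun.tail (recvStepF_stepF isHost allowed f hstep2), Or.inr hdom2⟩

/-- Simulation of a whole run of the dominated configuration. -/
lemma sim_run (hinc : Increasing f) {d d' : CfgF V P (List (V × P))}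
    (hr : Relation.ReflTransGen (stepF isHost allowed (deltaOf f)) d d') :
    ∀ c, DomF d c →
      ∃ c1, Relation.ReflTransGen (stepF isHost allowed (deltaOf f)) c c1 ∧
        (abortF isHost (deltaOf f) c1 ∨ DomF d' c1) := by
  induction hr with
  | refl => exact fun c h => ⟨c, .refl, Or.inr h⟩
  | tail hr hstep ih =>
    intro c hdc
    obtain ⟨c1, hrun, hres⟩ := ih c hdc
    rcases hres with h | hdom
    · exact ⟨c1, hrun, Or.inl h⟩
    · obtain ⟨c2, hrun2, hres2⟩ := sim_step isHost allowed f hinc hdom hstep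
      exact ⟨c2, hrun.trans hrun2, hres2⟩

end AuxProof

/-- In an increasing network under the FIFO semantics, if there is a run from the
initial configuration whose last step is middlebox `m` receiving packet `p` from
`v`, then from any reachable configuration there exists a continuation run that
either reaches an abort configuration or ends with a step in which `m` receives
`p` from `v`. -/
theorem increasing_packet_can_come_again {V P : Type}
    [DecidableEq V] [DecidableEq P]
    (isHost : V → Prop) (allowed : V → Set P)
    (f : V → List (V × P) → V × P → Option (V → Multiset P))
    (hinc : Increasing f)
    (m v : V) (p : P)
    (hex : ∃ c c' : CfgF V P (List (V × P)),
      Relation.ReflTransGen (stepF isHost allowed (deltaOf f))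
        (initF (fun _ => [])) c ∧
      recvStepF isHost (deltaOf f) m v p c c') :
    ∀ c0 : CfgF V P (List (V × P)),
      Relation.ReflTransGen (stepF isHost allowed (deltaOf f))
        (initF (fun _ => [])) c0 →
      ∃ c1 : CfgF V P (List (V × P)),
        Relation.ReflTransGen (stepF isHost allowed (deltaOf f)) c0 c1 ∧
        (abortF isHost (deltaOf f) c1 ∨
          ∃ c2, recvStepF isHost (deltaOf f) m v p c1 c2) := by
  intro c0 hc0
  obtain ⟨c, c', hrun, hrecv⟩ := hex
  have hdom0 : DomF (initF fun _ => []) c0 :=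
    ⟨fun w => List.nil_sublist _, fun u w => List.nil_sublist _⟩
  obtain ⟨c1, hrun1, hres1⟩ := sim_run isHost allowed f hinc hrun c0 hdom0
  rcases hres1 with h | hdom1
  · exact ⟨c1, hrun1, Or.inl h⟩
  · obtain ⟨c2, hrun2, hres2⟩ := sim_recv isHost allowed f hinc hdom1 hrecv
    rcases hres2 with h | ⟨c3, hstep3, _⟩
    · exact ⟨c2, hrun1.trans hrun2, Or.inl h⟩
    · exact ⟨c2, hrun1.trans hrun2, Or.inr ⟨c3, hstep3⟩⟩
end

section
/- In the VASS-to-network reduction, the sets of reachable configurations coincide at every step count: for all n ≥ 0, the set of VASS configurations reachable in exactly n steps equals the set of non-sink VASS-network configurations reachable in exactly n middlebox processing steps, i.e., S_VASS(n) = S_Network(n) \ ({sink} × ℕ^k). -/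
/-- The `t`-th unit vector in `ℤ^k`. -/
def unitZ {k : ℕ} (t : Fin k) : Fin k → ℤ := fun s => if s = t then 1 else 0

/-- `VReach E w v0 n (v, c)`: the VASS configuration `(v, c)` is reachable in
exactly `n` steps, i.e. there is a valid path of length `n` from `v0` (all partial
sums nonnegative, which is automatic since counter values live in `ℕ`) ending in
`v` with total weight `c`. -/
def VReach {V : Type} {k : ℕ} (E : Set (V × V)) (w : V × V → Fin k → ℤ) (v0 : V) :
    ℕ → V × (Fin k → ℕ) → Prop
  | 0, vc => vc.1 = v0 ∧ vc.2 = fun _ => 0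
  | n + 1, vc => ∃ v c, VReach E w v0 n (v, c) ∧ (v, vc.1) ∈ E ∧
      ∀ s, (vc.2 s : ℤ) = (c s : ℤ) + w (v, vc.1) s

/-- One packet-processing step of the network built from a simple VASS in the
EXPSPACE-hardness reduction. The middlebox state is a VASS vertex or the sink
state; the configuration also records the multiplicities of the packets `p_t`
pending on port 2. A positive edge of weight `+e_t` is simulated by receiving
`p_t` from the host port and forwarding it to port 2; a negative edge of weight
`-e_t` by consuming a pending `p_t` from port 2; mismatches send the middlebox to
the sink state, where all packets are discarded. -/
def netStep {V : Type} {k : ℕ} (E : Set (V × V)) (w : V × V → Fin k → ℤ)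
    (c c' : (V ⊕ Unit) × (Fin k → ℕ)) : Prop :=
  (∃ v t, c.1 = Sum.inl v ∧
    ((∃ u, (v, u) ∈ E ∧ w (v, u) = unitZ t ∧ c'.1 = Sum.inl u ∧
        c'.2 = Function.update c.2 t (c.2 t + 1)) ∨
      ((¬ ∃ u, (v, u) ∈ E ∧ w (v, u) = unitZ t) ∧ c'.1 = Sum.inr () ∧ c'.2 = c.2))) ∨
  (∃ v t, c.1 = Sum.inl v ∧ 1 ≤ c.2 t ∧
    ((∃ u, (v, u) ∈ E ∧ w (v, u) = -unitZ t ∧ c'.1 = Sum.inl u ∧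
        c'.2 = Function.update c.2 t (c.2 t - 1)) ∨
      ((¬ ∃ u, (v, u) ∈ E ∧ w (v, u) = -unitZ t) ∧ c'.1 = Sum.inr () ∧
        c'.2 = Function.update c.2 t (c.2 t - 1)))) ∨
  (c.1 = Sum.inr () ∧ c'.1 = Sum.inr () ∧
    (c'.2 = c.2 ∨ ∃ t, 1 ≤ c.2 t ∧ c'.2 = Function.update c.2 t (c.2 t - 1)))

/-- `NetReach E w v0 n c`: the network configuration `c` is reachable by a
scenario with exactly `n` packet-processing events, starting from state `v0` with
no pending packets on port 2. -/
def NetReach {V : Type} {k : ℕ} (E : Set (V × V)) (w : V × V → Fin k → ℤ) (v0 : V) :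
    ℕ → (V ⊕ Unit) × (Fin k → ℕ) → Prop
  | 0, c => c = (Sum.inl v0, fun _ => 0)
  | n + 1, c => ∃ c', NetReach E w v0 n c' ∧ netStep E w c' c

/-- Correctness of the VASS-to-network reduction: for a simple VASS (every edge
weight is `±` a unit vector, and outgoing edges of a vertex have distinct
weights), the set of VASS configurations reachable in exactly `n` steps equals
the set of non-sink network configurations reachable in exactly `n`
packet-processing steps: `S_VASS(n) = S_Network(n) \ ({sink} × ℕ^k)`. -/
theorem vass_network_reduction_correct {V : Type} {k : ℕ}
    (E : Set (V × V)) (w : V × V → Fin k → ℤ) (v0 : V)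
    (hsimple : ∀ e ∈ E, ∃ t : Fin k, w e = unitZ t ∨ w e = -unitZ t)
    (hdistinct : ∀ v u1 u2 : V, (v, u1) ∈ E → (v, u2) ∈ E →
      w (v, u1) = w (v, u2) → u1 = u2) :
    ∀ (n : ℕ) (v : V) (c : Fin k → ℕ),
      VReach E w v0 n (v, c) ↔ NetReach E w v0 n (Sum.inl v, c) := by
  intro n
  induction n with
  | zero =>
    intro v c
    simp [VReach, NetReach, Prod.ext_iff]
  | succ n ih =>
    intro v c
    constructor
    · rintro ⟨v', c', hV, hE, hw⟩
      obtain ⟨t, ht | ht⟩ := hsimple _ hE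
      · refine ⟨(Sum.inl v', c'), (ih v' c').1 hV,
          Or.inl ⟨v', t, rfl, Or.inl ⟨v, hE, ht, rfl, ?_⟩⟩⟩
        funext s
        have h := hw s
        rw [ht] at h
        by_cases hs : s = t
        · subst hs
          simp only [unitZ, if_pos rfl] at h
          simp only [Function.update_self]
          exact_mod_cast h
        · simp only [unitZ, if_neg hs, add_zero] at h
          simp only [Function.update_of_ne hs]
          exact_mod_cast h
      · have h1 : 1 ≤ c' t := by
          have h := hw t
          rw [ht] at h
          simp [unitZ] at h
          omega
        refine ⟨(Sum.inl v', c'), (ih v' c').1 hV,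
          Or.inr (Or.inl ⟨v', t, rfl, h1, Or.inl ⟨v, hE, ht, rfl, ?_⟩⟩)⟩
        funext s
        have h := hw s
        rw [ht] at h
        by_cases hs : s = t
        · subst hs
          simp [unitZ] at h
          simp only [Function.update_self]
          omega
        · simp only [unitZ, Pi.neg_apply, if_neg hs, neg_zero, add_zero] at h
          simp only [Function.update_of_ne hs]
          exact_mod_cast h
    · rintro ⟨⟨cs, cp⟩, hN, hstep⟩
      rcases hstep with ⟨v', t, hcs, hbr⟩ | ⟨v', t, hcs, h1, hbr⟩ | ⟨_, hsink, _⟩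
      · rcases hbr with ⟨u, hE, hwu, hu, hc⟩ | ⟨_, hsink, _⟩
        · simp only at hcs hu hc
          obtain rfl := Sum.inl.inj hu
          subst hcs
          refine ⟨v', cp, (ih v' cp).2 hN, hE, ?_⟩
          intro s
          rw [hwu]
          by_cases hs : s = t
          · subst hs
            simp [hc, unitZ]
          · simp [hc, unitZ, hs, Function.update_of_ne hs]
        · simp at hsink
      · rcases hbr with ⟨u, hE, hwu, hu, hc⟩ | ⟨_, hsink, _⟩
        · simp only at hcs hu hc h1
          obtain rfl := Sum.inl.inj hu
          subst hcs
          refine ⟨v', cp, (ih v' cp).2 hN, hE, ?_⟩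
          intro s
          rw [hwu]
          by_cases hs : s = t
          · subst hs
            simp [hc, unitZ]
            omega
          · simp [hc, unitZ, hs, Function.update_of_ne hs]
        · simp at hsink
      · simp at hsink
end
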